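/- Let G be a profinite group whose set of coprime commutators is contained in a union of countably many procyclic subgroups. Suppose G = PA, where P is a closed normal pro-p subgroup and A is a closed pronilpotent pro-p' subgroup. Then the index [A : C_A(P)] of the centralizer of P in A is finite. -/

import Mathlib

/-!  Basic notions for profinite groups.

A profinite group is modelled as a compact Hausdorff totally disconnected
topological group, via the instance assumptions
`[Group G] [TopologicalSpace G] [IsTopologicalGroup G] [CompactSpace G]
[T2Space G] [TotallyDisconnectedSpace G]`. -/

/-- The set of primes dividing the order of some finite continuous quotient of `K`:
`p ∈ primesOf K` iff `p` is prime and divides the (finite) index of some open normal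
subgroup of `K`. -/
def primesOf (K : Type*) [Group K] [TopologicalSpace K] : Set ℕ :=
  {p | p.Prime ∧ ∃ N : Subgroup K, N.Normal ∧ IsOpen (N : Set K) ∧ N.index ≠ 0 ∧ p ∣ N.index}

/-- The closed subgroup topologically generated by `x`. -/
def closedGen {G : Type*} [Group G] [TopologicalSpace G] [IsTopologicalGroup G] (x : G) :
    Subgroup G :=
  (Subgroup.zpowers x).topologicalClosure

/-- `x` and `y` have coprime orders: `π(⟨x⟩) ∩ π(⟨y⟩) = ∅`. -/
def CoprimeOrders {G : Type*} [Group G] [TopologicalSpace G] [IsTopologicalGroup G] (x y : G) :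
    Prop :=
  primesOf ↥(closedGen x) ∩ primesOf ↥(closedGen y) = ∅

open scoped commutatorElement

/-- `g` is a coprime commutator: `g = [x,y]` with `x, y` of coprime orders. -/
def IsCoprimeCommutator {G : Type*} [Group G] [TopologicalSpace G] [IsTopologicalGroup G]
    (g : G) : Prop :=
  ∃ x y : G, CoprimeOrders x y ∧ g = ⁅x, y⁆

/-- A topological group is procyclic if it is topologically generated by a single element. -/
def IsProcyclic (K : Type*) [Group K] [TopologicalSpace K] : Prop :=
  ∃ g : K, closure ((Subgroup.zpowers g : Subgroup K) : Set K) = Set.univ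

/-- A subgroup of a topological group is procyclic if it is topologically generated by a
single element. -/
def IsProcyclicSubgroup {G : Type*} [Group G] [TopologicalSpace G] (H : Subgroup G) : Prop :=
  ∃ g ∈ H, closure ((Subgroup.zpowers g : Subgroup G) : Set G) = (H : Set G)

/-- The pronilpotent residual `γ∞(G)`: the intersection of the terms of the lower central
series of `G` (each term taken as the corresponding closed subgroup). -/
def pronilpotentResidual (G : Type*) [Group G] [TopologicalSpace G] [IsTopologicalGroup G] :
    Subgroup G :=
  ⨅ n : ℕ, (Subgroup.lowerCentralSeries (⊤ : Subgroup G) n).topologicalClosure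

/-- A profinite group is pronilpotent iff its pronilpotent residual is trivial. -/
def IsPronilpotent (K : Type*) [Group K] [TopologicalSpace K] [IsTopologicalGroup K] : Prop :=
  pronilpotentResidual K = ⊥

/-- The quotient `K ⧸ N` is procyclic. -/
def QuotientIsProcyclic {K : Type*} [Group K] [TopologicalSpace K] (N : Subgroup K)
    (hN : N.Normal) : Prop :=
  letI := hN
  IsProcyclic (K ⧸ N)

/-- `K` is finite-by-procyclic: it has a finite normal subgroup with procyclic quotient. -/
def FiniteByProcyclic (K : Type*) [Group K] [TopologicalSpace K] : Prop :=
  ∃ (N : Subgroup K) (hN : N.Normal), Finite N ∧ QuotientIsProcyclic N hN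

/-- The quotient `K ⧸ N` is pronilpotent. -/
def QuotientIsPronilpotent {K : Type*} [Group K] [TopologicalSpace K] [IsTopologicalGroup K]
    (N : Subgroup K) (hN : N.Normal) : Prop :=
  letI := hN
  IsPronilpotent (K ⧸ N)

/-- The closed subgroup `[S,T]` generated by the commutators `⁅s,t⁆`, `s ∈ S`, `t ∈ T`. -/
def commClosure {G : Type*} [Group G] [TopologicalSpace G] [IsTopologicalGroup G]
    (S T : Set G) : Subgroup G :=
  (Subgroup.closure {z : G | ∃ s ∈ S, ∃ t ∈ T, z = ⁅s, t⁆}).topologicalClosure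



/-!
The commutators `⁅u, a⁆` with `u ∈ P`, `a ∈ A` form a compact set of coprime commutators, so by
Baire's theorem one procyclic `C i` contains every `⁅u * v, a * c⁆` for `v, c` in some open normal
subgroup `N`. Conjugating, the closed subgroup `W = [N ⊓ P, N ⊓ A]` lies in a conjugate of `C i`:
it is an abelian pro-`p` group all of whose finite quotients are cyclic, so `W ^ p` is open in `W`
and the elements `b` of `A` in a smaller open normal subgroup act trivially on `W / W ^ p`.
An automorphism of `p'`-order of an abelian `p`-group that is trivial modulo `p`-th powers is
trivial, so `b` centralizes `W`; and twice the coprime-action rule "`⁅x, b, b⁆ = 1` implies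
`⁅x, b⁆ = 1`" shows that `b` centralizes `N ⊓ P`, then `P`. Thus `C_A(P)` contains an open subgroup
of `A`.
-/

section GroupTheory

variable {M : Type*} [Group M]

theorem commutatorElement_eq_one_of_coprime {g c : M} (hc : Commute c ⁅g, c⁆)
    (hcop : (orderOf ⁅g, c⁆).Coprime (orderOf c)) : ⁅g, c⁆ = 1 := by
  have hconj : orderOf c = orderOf (⁅g, c⁆ * c) :=
    SemiconjBy.orderOf_eq g (by simp [SemiconjBy, commutatorElement_def])
  rw [hc.symm.orderOf_mul_eq_mul_orderOf_of_coprime hcop] at hconj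
  rcases (orderOf c).eq_zero_or_pos with h0 | hpos
  · rw [h0, Nat.coprime_zero_right] at hcop
    exact orderOf_eq_one_iff.mp hcop
  · exact orderOf_eq_one_iff.mp ((Nat.mul_eq_right hpos.ne').mp hconj.symm)

theorem commute_of_pow_eq_one_of_commutatorElement_eq_pow {Y : Subgroup M}
    (hY : ∀ y ∈ Y, ∀ z ∈ Y, Commute y z) {p e s : ℕ} (hcop : (p ^ e).Coprime s)
    (hexp : ∀ y ∈ Y, y ^ p ^ e = 1) {x : M} (hxs : x ^ s = 1)
    (hx : ∀ y ∈ Y, ∃ z ∈ Y, z ^ p = ⁅x, y⁆) {y : M} (hy : y ∈ Y) : Commute x y := by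
  have step (n : ℕ) (hn : ∀ y ∈ Y, Commute x (y ^ p ^ (n + 1))) (y : M) (hy : y ∈ Y) :
      Commute x (y ^ p ^ n) := by
    obtain ⟨z, hz, hxy⟩ := hx y hy
    have hconj : x * y * x⁻¹ = z ^ p * y := by
      rw [hxy, commutatorElement_def]; group
    have hd : ⁅y ^ p ^ n, x⁆ = (z ^ p ^ (n + 1))⁻¹ := by
      rw [← commutatorElement_inv, commutatorElement_def, ← conj_pow, hconj,
        (hY _ (Y.pow_mem hz p) y hy).mul_pow, pow_succ', pow_mul]
      group
    have hdY : ⁅y ^ p ^ n, x⁆ ∈ Y := hd ▸ Y.inv_mem (Y.pow_mem hz _)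
    refine (commutatorElement_eq_one_iff_commute.mp
      (commutatorElement_eq_one_of_coprime ?_ ?_)).symm
    · exact hd ▸ (hn z hz).inv_right
    · exact (hcop.coprime_dvd_left (orderOf_dvd_of_pow_eq_one (hexp _ hdY))).coprime_dvd_right
        (orderOf_dvd_of_pow_eq_one hxs)
  have claim (n : ℕ) : (∀ y ∈ Y, Commute x (y ^ p ^ n)) → ∀ y ∈ Y, Commute x y := by
    induction n with
    | zero => simp
    | succ n ih => exact fun h => ih (step n h)
  exact claim e (fun y hy => by rw [hexp y hy]; exact Commute.one_right x) y hy

theorem conj_commutatorElement_mem {Z K B : Subgroup M} {u a : M}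
    (h : ∀ v ∈ K, ∀ c ∈ B, ⁅u * v, a * c⁆ ∈ Z) {w c : M} (hw : w ∈ K) (hc : c ∈ B) :
    (a * u) * ⁅w, c⁆ * (a * u)⁻¹ ∈ Z := by
  have key : (a * u) * ⁅w, c⁆ * (a * u)⁻¹ =
      ⁅u * w, a * 1⁆⁻¹ * ⁅u * w, a * c⁆ * (⁅u * 1, a * 1⁆⁻¹ * ⁅u * 1, a * c⁆)⁻¹ := by
    simp only [commutatorElement_def]; group
  rw [key]
  exact Z.mul_mem (Z.mul_mem (Z.inv_mem (h w hw 1 B.one_mem)) (h w hw c hc))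
    (Z.inv_mem (Z.mul_mem (Z.inv_mem (h 1 K.one_mem 1 B.one_mem)) (h 1 K.one_mem c hc)))

theorem commutatorElement_mem_of_mem_left {H : Subgroup M} [H.Normal] {x : M} (hx : x ∈ H)
    (y : M) : ⁅x, y⁆ ∈ H :=
  Subgroup.commutator_le_left H ⊤ (Subgroup.commutator_mem_commutator hx (Subgroup.mem_top y))

theorem commutatorElement_mem_of_mem_right {H : Subgroup M} [H.Normal] (x : M) {y : M}
    (hy : y ∈ H) : ⁅x, y⁆ ∈ H :=
  Subgroup.commutator_le_right ⊤ H (Subgroup.commutator_mem_commutator (Subgroup.mem_top x) hy)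

theorem mk_pow_index_subgroupOf {L N : Subgroup M} [N.Normal] {x : M} (hx : x ∈ L) :
    (x : M ⧸ N) ^ (N.subgroupOf L).index = 1 := by
  rw [← QuotientGroup.mk_pow, QuotientGroup.eq_one_iff]
  simpa using Subgroup.mem_subgroupOf.mp ((N.subgroupOf L).pow_index_mem ⟨x, hx⟩)

theorem index_dvd_of_isCyclic_quotient {N : Subgroup M} [N.Normal] [IsCyclic (M ⧸ N)] {p : ℕ}
    (h : ∀ x : M, x ^ p ∈ N) : N.index ∣ p := by
  rw [Subgroup.index_eq_card, ← IsCyclic.exponent_eq_card]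
  refine Monoid.exponent_dvd_of_forall_pow_eq_one fun y => ?_
  induction y using QuotientGroup.induction_on with
  | H x => rw [← QuotientGroup.mk_pow, QuotientGroup.eq_one_iff]; exact h x

theorem isCyclic_quotient_of_ker_le {Q : Type*} [Group Q] (f : M →* Q) [IsCyclic f.range]
    {N : Subgroup M} [N.Normal] (h : f.ker ≤ N) : IsCyclic (M ⧸ N) := by
  have : IsCyclic (M ⧸ f.ker) := isCyclic_of_surjective _
    (QuotientGroup.quotientKerEquivRange f).symm.surjective
  exact isCyclic_of_surjective _ (QuotientGroup.lift_surjective_of_surjective f.ker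
    (QuotientGroup.mk' N) (QuotientGroup.mk'_surjective N) (by rwa [QuotientGroup.ker_mk']))

end GroupTheory

theorem exists_isOpen_inter_subset_of_subset_iUnion {X ι : Type*} [TopologicalSpace X]
    [T2Space X] [Countable ι] {S : Set X} (hS : IsCompact S) (hne : S.Nonempty)
    {F : ι → Set X} (hF : ∀ i, IsClosed (F i)) (hSF : S ⊆ ⋃ i, F i) :
    ∃ i, ∃ O : Set X, IsOpen O ∧ (S ∩ O).Nonempty ∧ S ∩ O ⊆ F i := by
  have : CompactSpace S := isCompact_iff_compactSpace.mp hS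
  have : Nonempty S := hne.to_subtype
  obtain ⟨i, ⟨x, hx⟩⟩ := nonempty_interior_of_iUnion_of_closed
    (f := fun i => Subtype.val ⁻¹' F i) (fun i => (hF i).preimage continuous_subtype_val)
    (Set.eq_univ_of_forall fun x => by simpa using hSF x.2)
  obtain ⟨O, hO, hOS⟩ := isOpen_induced_iff.mp (isOpen_interior (s := Subtype.val ⁻¹' F i))
  refine ⟨i, O, hO, ⟨x, x.2, ?_⟩, fun y hy => ?_⟩
  · rw [← hOS] at hx
    exact hx
  · have hyO : (⟨y, hy.1⟩ : S) ∈ Subtype.val ⁻¹' O := hy.2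
    rw [hOS] at hyO
    exact interior_subset (s := Subtype.val ⁻¹' F i) hyO

section Profinite

variable {G : Type*} [Group G] [TopologicalSpace G] [IsTopologicalGroup G]

theorem index_ne_zero_of_isOpen [CompactSpace G] {H : Subgroup G} (hH : IsOpen (H : Set G)) :
    H.index ≠ 0 :=
  have := H.quotient_finite_of_isOpen hH
  Subgroup.index_ne_zero_of_finite

theorem index_subgroupOf_ne_zero [CompactSpace G] {L N : Subgroup G} (hL : IsClosed (L : Set G))
    (hN : IsOpen (N : Set G)) : (N.subgroupOf L).index ≠ 0 :=
  have := isCompact_iff_compactSpace.mp hL.isCompact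
  index_ne_zero_of_isOpen (hN.preimage continuous_subtype_val)

theorem exists_openNormal_comap_le [CompactSpace G] [TotallyDisconnectedSpace G] {H : Type*}
    [Group H] [TopologicalSpace H] (f : H →* G) (hf : Topology.IsInducing f) {N : Subgroup H}
    (hN : IsOpen (N : Set H)) :
    ∃ U : Subgroup G, U.Normal ∧ IsOpen (U : Set G) ∧ U.comap f ≤ N := by
  obtain ⟨O, hO, hON⟩ := hf.isOpen_iff.mp hN
  have h1 : (1 : G) ∈ O := by
    have h : (1 : H) ∈ f ⁻¹' O := by rw [hON]; exact N.one_mem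
    simpa using h
  obtain ⟨U, hU⟩ := ProfiniteGrp.exist_openNormalSubgroup_sub_open_nhds_of_one hO h1
  refine ⟨U, U.isNormal', U.isOpen, fun x hx => ?_⟩
  have h : x ∈ f ⁻¹' O := hU hx
  rwa [hON] at h

theorem exists_openNormal_commutatorElement_mem [CompactSpace G] [TotallyDisconnectedSpace G]
    {O : Set G} (hO : IsOpen O) {u a : G} (h : ⁅u, a⁆ ∈ O) :
    ∃ N : Subgroup G, N.Normal ∧ IsOpen (N : Set G) ∧ ∀ v ∈ N, ∀ c ∈ N, ⁅u * v, a * c⁆ ∈ O := by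
  have hcont : Continuous fun q : G × G => ⁅u * q.1, a * q.2⁆ := by
    simp only [commutatorElement_def]; fun_prop
  obtain ⟨V₁, V₂, hV₁, hV₂, h1₁, h1₂, hV⟩ :=
    isOpen_prod_iff.mp (hO.preimage hcont) 1 1 (by simpa using h)
  obtain ⟨N, hN⟩ :=
    ProfiniteGrp.exist_openNormalSubgroup_sub_open_nhds_of_one (hV₁.inter hV₂) ⟨h1₁, h1₂⟩
  exact ⟨N, N.isNormal', N.isOpen, fun v hv c hc =>
    hV (show (v, c) ∈ V₁ ×ˢ V₂ from ⟨(hN hv).1, (hN hc).2⟩)⟩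

theorem commute_of_forall_commute_mk [CompactSpace G] [TotallyDisconnectedSpace G] [T1Space G]
    {x y : G}
    (h : ∀ (N : Subgroup G) [N.Normal], IsOpen (N : Set G) → Commute (x : G ⧸ N) (y : G ⧸ N)) :
    Commute x y := by
  rw [← commutatorElement_eq_one_iff_commute]
  by_contra hxy
  obtain ⟨N, hN⟩ := ProfiniteGrp.exist_openNormalSubgroup_sub_open_nhds_of_one
    isOpen_compl_singleton (Ne.symm hxy)
  have hN' : ⁅x, y⁆ ∈ N.toSubgroup := by
    rw [← QuotientGroup.eq_one_iff, ← QuotientGroup.mk'_apply, map_commutatorElement]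
    exact commutatorElement_eq_one_iff_commute.mpr (h N N.isOpen)
  exact hN hN' rfl

theorem isOpen_of_forall_index_le [CompactSpace G] [TotallyDisconnectedSpace G] {D : Subgroup G}
    (hD : IsClosed (D : Set G)) (n : ℕ)
    (h : ∀ N : Subgroup G, IsOpen (N : Set G) → D ≤ N → N.index ≤ n) : IsOpen (D : Set G) := by
  set S := {N : Subgroup G | IsOpen (N : Set G) ∧ D ≤ N}
  have hbdd : BddAbove (Subgroup.index '' S) := ⟨n, by rintro _ ⟨N, hN, rfl⟩; exact h N hN.1 hN.2⟩
  obtain ⟨N₀, hN₀, hmax⟩ := Nat.sSup_mem ⟨_, Set.mem_image_of_mem _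
    (show ⊤ ∈ S from ⟨isOpen_univ, le_top⟩)⟩ hbdd
  -- an open subgroup containing `D` of maximal index lies in all the others
  have hN₀D : N₀ ≤ D := by
    refine le_trans (le_sInf fun N hN => ?_) (ProfiniteGrp.closedSubgroup_eq_sInf_open ⟨D, hD⟩).ge
    have hinf : N₀ ⊓ N ∈ S := ⟨hN₀.1.inter hN.1, le_inf hN₀.2 hN.2⟩
    have hle : (N₀ ⊓ N).index ≤ N₀.index := hmax ▸ le_csSup hbdd ⟨_, hinf, rfl⟩
    have hrel := Subgroup.relIndex_mul_index (inf_le_left : N₀ ⊓ N ≤ N₀)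
    have hpos := Nat.pos_of_ne_zero (index_ne_zero_of_isOpen hinf.1)
    have hrel1 : (N₀ ⊓ N).relIndex N₀ = 1 := by
      have hr : (N₀ ⊓ N).relIndex N₀ ≠ 0 := by rintro h0; rw [h0, zero_mul] at hrel; omega
      nlinarith [Nat.pos_of_ne_zero hr]
    exact (le_inf_iff.mp (Subgroup.relIndex_eq_one.mp hrel1)).2
  exact Subgroup.isOpen_mono hN₀D hN₀.1

theorem mem_primesOf_of_dvd_index [CompactSpace G] {L N : Subgroup G} (hL : IsClosed (L : Set G))
    (hN : N.Normal) (hNo : IsOpen (N : Set G)) {q : ℕ} (hq : q.Prime)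
    (hqN : q ∣ (N.subgroupOf L).index) : q ∈ primesOf L :=
  ⟨hq, N.subgroupOf L, hN.comap L.subtype, hNo.preimage continuous_subtype_val,
    index_subgroupOf_ne_zero hL hNo, hqN⟩

theorem primesOf_mono [CompactSpace G] [TotallyDisconnectedSpace G] {H L : Subgroup G}
    (hHL : H ≤ L) (hL : IsClosed (L : Set G)) : primesOf H ⊆ primesOf L := by
  have := isCompact_iff_compactSpace.mp hL.isCompact
  rintro q ⟨hq, N, -, hNo, -, hqN⟩
  obtain ⟨U, hU, hUo, hUN⟩ := exists_openNormal_comap_le (Subgroup.inclusion hHL)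
    (Topology.IsInducing.subtypeVal.of_comp_iff.mp Topology.IsInducing.subtypeVal) hNo
  refine ⟨hq, U, hU, hUo, index_ne_zero_of_isOpen hUo, hqN.trans ?_⟩
  refine (Subgroup.index_dvd_of_le hUN).trans ?_
  rw [Subgroup.index_comap]
  exact U.relIndex_dvd_index_of_normal _

theorem coprime_index_subgroupOf [CompactSpace G] {H K N : Subgroup G}
    (hH : IsClosed (H : Set G)) (hK : IsClosed (K : Set G))
    (hHK : Disjoint (primesOf H) (primesOf K)) (hN : N.Normal) (hNo : IsOpen (N : Set G)) :
    ((N.subgroupOf H).index).Coprime (N.subgroupOf K).index :=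
  Nat.coprime_of_dvd fun _ hq hqH hqK => Set.disjoint_left.mp hHK
    (mem_primesOf_of_dvd_index hH hN hNo hq hqH) (mem_primesOf_of_dvd_index hK hN hNo hq hqK)

theorem index_subgroupOf_eq_pow [CompactSpace G] {L N : Subgroup G} (hL : IsClosed (L : Set G))
    {p : ℕ} (hLp : primesOf L ⊆ {p}) (hN : N.Normal) (hNo : IsOpen (N : Set G)) :
    ∃ e, (N.subgroupOf L).index = p ^ e :=
  ⟨_, Nat.eq_prime_pow_of_unique_prime_dvd (index_subgroupOf_ne_zero hL hNo)
    fun hq hqN => hLp (mem_primesOf_of_dvd_index hL hN hNo hq hqN)⟩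

theorem closedGen_le {H : Subgroup G} (hH : IsClosed (H : Set G)) {x : G} (hx : x ∈ H) :
    closedGen x ≤ H :=
  Subgroup.topologicalClosure_minimal _ (Subgroup.zpowers_le.mpr hx) hH

theorem coprimeOrders_of_mem [CompactSpace G] [TotallyDisconnectedSpace G] {P A : Subgroup G}
    (hP : IsClosed (P : Set G)) (hA : IsClosed (A : Set G))
    (hPA : Disjoint (primesOf P) (primesOf A)) {u a : G} (hu : u ∈ P) (ha : a ∈ A) :
    CoprimeOrders u a :=
  Set.disjoint_iff_inter_eq_empty.mp
    (hPA.mono (primesOf_mono (closedGen_le hP hu) hP) (primesOf_mono (closedGen_le hA ha) hA))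

theorem commutatorElement_mem_commClosure {S T : Set G} {s t : G} (hs : s ∈ S) (ht : t ∈ T) :
    ⁅s, t⁆ ∈ commClosure S T :=
  Subgroup.le_topologicalClosure _ (Subgroup.subset_closure ⟨s, hs, t, ht, rfl⟩)

theorem commClosure_le {S T : Set G} {H : Subgroup G} (hH : IsClosed (H : Set G))
    (h : ∀ s ∈ S, ∀ t ∈ T, ⁅s, t⁆ ∈ H) : commClosure S T ≤ H :=
  Subgroup.topologicalClosure_minimal _
    ((Subgroup.closure_le _).mpr (by rintro _ ⟨s, hs, t, ht, rfl⟩; exact h s hs t ht)) hH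

theorem commutatorElement_mem_commClosure_of_mem {K B : Subgroup G} [K.Normal] {b w : G}
    (hb : b ∈ B) (hw : w ∈ commClosure K B) : ⁅b, w⁆ ∈ commClosure K B := by
  have hclosed : IsClosed (((commClosure K B).comap (MulAut.conj b : G →* G) : Subgroup G) :
      Set G) :=
    (Subgroup.isClosed_topologicalClosure _).preimage
      (show Continuous fun x => b * x * b⁻¹ by fun_prop)
  have hle : commClosure K B ≤ (commClosure K B).comap (MulAut.conj b : G →* G) := by
    refine commClosure_le hclosed fun s hs t ht => ?_
    have key : b * ⁅s, t⁆ * b⁻¹ = ⁅b * s * b⁻¹, b * t * b⁻¹⁆ := by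
      simp only [commutatorElement_def]; group
    rw [Subgroup.mem_comap, MonoidHom.coe_coe, MulAut.conj_apply, key]
    have hs' : b * s * b⁻¹ ∈ K := Subgroup.Normal.conj_mem inferInstance s hs b
    have ht' : b * t * b⁻¹ ∈ B := B.mul_mem (B.mul_mem hb ht) (B.inv_mem hb)
    exact commutatorElement_mem_commClosure hs' ht'
  have hconj : b * w * b⁻¹ ∈ commClosure K B := by
    have := hle hw
    rwa [Subgroup.mem_comap, MonoidHom.coe_coe, MulAut.conj_apply] at this
  rw [commutatorElement_def]
  exact Subgroup.mul_mem _ hconj (Subgroup.inv_mem _ hw)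

theorem relIndex_ne_zero_of_isOpen [CompactSpace G] {H A U : Subgroup G}
    (hA : IsClosed (A : Set G)) (hU : IsOpen (U : Set G)) (h : U ⊓ A ≤ H) : H.relIndex A ≠ 0 :=
  have := isCompact_iff_compactSpace.mp hA.isCompact
  index_ne_zero_of_isOpen (Subgroup.isOpen_mono (H₁ := U.subgroupOf A)
    (fun a ha => h ⟨ha, a.2⟩) (hU.preimage continuous_subtype_val))

end Profinite

section Procyclic

variable {G : Type*} [Group G] [TopologicalSpace G] [IsTopologicalGroup G]

theorem IsProcyclicSubgroup.isCyclic_map {Z : Subgroup G} (hZ : IsProcyclicSubgroup Z)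
    {U : Subgroup G} [U.Normal] (hU : IsOpen (U : Set G)) :
    IsCyclic (Z.map (QuotientGroup.mk' U)) := by
  obtain ⟨g, -, hg⟩ := hZ
  set O := (Subgroup.zpowers (QuotientGroup.mk' U g)).comap (QuotientGroup.mk' U)
  have hUO : U ≤ O := fun x hx => by
    simp [O, (QuotientGroup.eq_one_iff x).mpr hx]
  have hZO : Z ≤ O := by
    rw [← SetLike.coe_subset_coe, ← hg]
    exact closure_minimal (Subgroup.zpowers_le.mpr (Subgroup.mem_zpowers _))
      (Subgroup.isClosed_of_isOpen _ (Subgroup.isOpen_mono hUO hU))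
  exact Subgroup.isCyclic_of_le (Subgroup.map_le_iff_le_comap.mpr hZO)

theorem IsProcyclicSubgroup.commute [CompactSpace G] [TotallyDisconnectedSpace G] [T1Space G]
    {Z : Subgroup G} (hZ : IsProcyclicSubgroup Z) {x y : G} (hx : x ∈ Z) (hy : y ∈ Z) :
    Commute x y :=
  commute_of_forall_commute_mk fun U _ hU => by
    have := hZ.isCyclic_map hU
    let := IsCyclic.commGroup (α := Z.map (QuotientGroup.mk' U))
    exact congrArg Subtype.val
      (mul_comm (⟨_, Subgroup.mem_map_of_mem _ hx⟩ : Z.map (QuotientGroup.mk' U))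
        ⟨_, Subgroup.mem_map_of_mem _ hy⟩)

theorem IsProcyclicSubgroup.comap_conj {Z : Subgroup G} (hZ : IsProcyclicSubgroup Z) (g : G) :
    IsProcyclicSubgroup (Z.comap (MulAut.conj g : G →* G)) := by
  obtain ⟨z, hzZ, hz⟩ := hZ
  let e : G ≃ₜ G := (Homeomorph.mulLeft g).trans (Homeomorph.mulRight g⁻¹)
  have he : ⇑e = MulAut.conj g := by ext x; simp [e]
  have hzpow : Subgroup.zpowers ((MulAut.conj g).symm z) =
      (Subgroup.zpowers z).comap (MulAut.conj g : G →* G) := by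
    rw [Subgroup.comap_equiv_eq_map_symm, MonoidHom.map_zpowers]; rfl
  refine ⟨(MulAut.conj g).symm z, Subgroup.mem_comap.mpr (by simpa [mul_assoc] using hzZ), ?_⟩
  rw [hzpow, Subgroup.coe_comap, Subgroup.coe_comap, MonoidHom.coe_coe, ← he,
    ← Homeomorph.preimage_closure, hz]

open scoped IsMulCommutative in
theorem exists_openNormal_inf_subset_pow [CompactSpace G] [TotallyDisconnectedSpace G] [T2Space G]
    {Z W : Subgroup G} (hZ : IsProcyclicSubgroup Z) (hW : IsClosed (W : Set G)) (hWZ : W ≤ Z)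
    {p : ℕ} (hp : 0 < p) :
    ∃ U : Subgroup G, U.Normal ∧ IsOpen (U : Set G) ∧ ∀ w ∈ W, w ∈ U → ∃ z ∈ W, z ^ p = w := by
  have := isCompact_iff_compactSpace.mp hW.isCompact
  have : IsMulCommutative W :=
    .of_comm fun x y => Subtype.ext (hZ.commute (hWZ x.2) (hWZ y.2)).eq
  set D : Subgroup W := (powMonoidHom p).range
  have hD : IsClosed (D : Set W) := (isCompact_range (continuous_pow p)).isClosed
  -- the finite quotients of `W` are cyclic, so an open subgroup containing `D` has index `∣ p`
  have hDo : IsOpen (D : Set W) := isOpen_of_forall_index_le hD p fun N hNo hDN => by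
    obtain ⟨U, hU, hUo, hUN⟩ :=
      exists_openNormal_comap_le W.subtype Topology.IsInducing.subtypeVal hNo
    have : IsCyclic ((QuotientGroup.mk' U).comp W.subtype).range := by
      rw [MonoidHom.range_comp, Subgroup.range_subtype]
      have := hZ.isCyclic_map hUo
      exact Subgroup.isCyclic_of_le (Subgroup.map_mono hWZ)
    have := isCyclic_quotient_of_ker_le ((QuotientGroup.mk' U).comp W.subtype) (N := N) (by
      rwa [← MonoidHom.comap_ker, QuotientGroup.ker_mk'])
    exact Nat.le_of_dvd hp (index_dvd_of_isCyclic_quotient fun x => hDN ⟨x, rfl⟩)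
  obtain ⟨U, hU, hUo, hUD⟩ := exists_openNormal_comap_le W.subtype
    Topology.IsInducing.subtypeVal hDo
  refine ⟨U, hU, hUo, fun w hw hwU => ?_⟩
  obtain ⟨z, hz⟩ := hUD (show (⟨w, hw⟩ : W) ∈ U.comap W.subtype from hwU)
  exact ⟨z, z.2, congrArg Subtype.val hz⟩

end Procyclic

section CoprimeAction

variable {G : Type*} [Group G] [TopologicalSpace G] [IsTopologicalGroup G] [CompactSpace G]
  [TotallyDisconnectedSpace G] [T1Space G]

theorem commute_of_commute_commutatorElement {P A : Subgroup G} (hP : IsClosed (P : Set G))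
    (hA : IsClosed (A : Set G)) (hPA : Disjoint (primesOf P) (primesOf A)) {x c : G}
    (hc : c ∈ A) (hxc : ⁅x, c⁆ ∈ P) (hcomm : Commute c ⁅x, c⁆) : Commute x c := by
  refine commute_of_forall_commute_mk fun N hN hNo => ?_
  let π := QuotientGroup.mk' N
  have hcomm' : Commute (π c) ⁅π x, π c⁆ := map_commutatorElement π x c ▸ hcomm.map π
  have hcop : (orderOf ⁅π x, π c⁆).Coprime (orderOf (π c)) := by
    rw [← map_commutatorElement]
    exact ((coprime_index_subgroupOf hP hA hPA hN hNo).coprime_dvd_left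
      (orderOf_dvd_of_pow_eq_one (mk_pow_index_subgroupOf hxc))).coprime_dvd_right
      (orderOf_dvd_of_pow_eq_one (mk_pow_index_subgroupOf hc))
  exact commutatorElement_eq_one_iff_commute.mp (commutatorElement_eq_one_of_coprime hcomm' hcop)

theorem commute_of_commutatorElement_eq_pow {W A : Subgroup G} (hW : IsClosed (W : Set G))
    (hA : IsClosed (A : Set G)) {p : ℕ} (hWp : primesOf W ⊆ {p}) (hAp : p ∉ primesOf A)
    (hWcomm : ∀ x ∈ W, ∀ y ∈ W, Commute x y) {b : G} (hb : b ∈ A)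
    (hbW : ∀ w ∈ W, ∃ z ∈ W, z ^ p = ⁅b, w⁆) {w : G} (hw : w ∈ W) : Commute b w := by
  refine commute_of_forall_commute_mk fun N hN hNo => ?_
  let π := QuotientGroup.mk' N
  obtain ⟨e, he⟩ := index_subgroupOf_eq_pow hW hWp hN hNo
  have hcop : (p ^ e).Coprime (N.subgroupOf A).index :=
    he ▸ coprime_index_subgroupOf hW hA (Set.disjoint_left.mpr fun q hq hqA =>
      hAp (Set.mem_singleton_iff.mp (hWp hq) ▸ hqA)) hN hNo
  refine commute_of_pow_eq_one_of_commutatorElement_eq_pow (Y := W.map π) (x := π b) ?_ hcop ?_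
    (mk_pow_index_subgroupOf hb) ?_ (Subgroup.mem_map_of_mem π hw)
  · rintro _ ⟨y, hy, rfl⟩ _ ⟨z, hz, rfl⟩
    exact (hWcomm y hy z hz).map π
  · rintro _ ⟨y, hy, rfl⟩
    exact he ▸ mk_pow_index_subgroupOf hy
  · rintro _ ⟨y, hy, rfl⟩
    obtain ⟨z, hz, hbyz⟩ := hbW y hy
    exact ⟨π z, Subgroup.mem_map_of_mem π hz, by rw [← map_commutatorElement, ← hbyz, map_pow]⟩

theorem commute_of_commute_commClosure {P A N : Subgroup G} [P.Normal] [N.Normal]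
    (hP : IsClosed (P : Set G)) (hA : IsClosed (A : Set G))
    (hPA : Disjoint (primesOf P) (primesOf A)) {b : G} (hbA : b ∈ A) (hbN : b ∈ N)
    (hbW : ∀ w ∈ commClosure (N ⊓ P : Subgroup G) (N ⊓ A : Subgroup G), Commute b w)
    {x : G} (hx : x ∈ P) : Commute x b := by
  have hK : ∀ y ∈ N ⊓ P, Commute y b := by
    intro y hy
    have hyb : ⁅y, b⁆ ∈ commClosure (N ⊓ P : Subgroup G) (N ⊓ A : Subgroup G) :=
      commutatorElement_mem_commClosure hy (Subgroup.mem_inf.mpr ⟨hbN, hbA⟩)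
    have hyP : ⁅y, b⁆ ∈ P := commutatorElement_mem_of_mem_left (Subgroup.mem_inf.mp hy).2 b
    exact commute_of_commute_commutatorElement hP hA hPA hbA hyP (hbW _ hyb)
  have hxb : ⁅x, b⁆ ∈ N ⊓ P := Subgroup.mem_inf.mpr
    ⟨commutatorElement_mem_of_mem_right x hbN, commutatorElement_mem_of_mem_left hx b⟩
  exact commute_of_commute_commutatorElement hP hA hPA hbA (Subgroup.mem_inf.mp hxb).2
    (hK _ hxb).symm

end CoprimeAction

theorem exists_commutatorElement_mem_of_subset_iUnion {G : Type*} [Group G] [TopologicalSpace G]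
    [IsTopologicalGroup G] [CompactSpace G] [TotallyDisconnectedSpace G] [T2Space G]
    {ι : Type*} [Countable ι] {C : ι → Set G} (hC : ∀ i, IsClosed (C i)) {P A : Subgroup G}
    (hP : IsClosed (P : Set G)) (hA : IsClosed (A : Set G))
    (hcov : ∀ u ∈ P, ∀ a ∈ A, ⁅u, a⁆ ∈ ⋃ i, C i) :
    ∃ i, ∃ u ∈ P, ∃ a ∈ A, ∃ N : Subgroup G, N.Normal ∧ IsOpen (N : Set G) ∧
      ∀ v ∈ N ⊓ P, ∀ c ∈ N ⊓ A, ⁅u * v, a * c⁆ ∈ C i := by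
  set S := (fun q : G × G => ⁅q.1, q.2⁆) '' ((P : Set G) ×ˢ (A : Set G))
  have hS : IsCompact S := (hP.isCompact.prod hA.isCompact).image
    (by simp only [commutatorElement_def]; fun_prop)
  obtain ⟨i, O, hO, ⟨_, ⟨⟨u, a⟩, ⟨hu, ha⟩, rfl⟩, huaO⟩, hOC⟩ :=
    exists_isOpen_inter_subset_of_subset_iUnion hS
      ⟨_, ⟨1, 1⟩, ⟨P.one_mem, A.one_mem⟩, rfl⟩ hC
      (by rintro _ ⟨⟨u, a⟩, ⟨hu, ha⟩, rfl⟩; exact hcov u hu a ha)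
  obtain ⟨N, hN, hNo, hNO⟩ := exists_openNormal_commutatorElement_mem hO huaO
  exact ⟨i, u, hu, a, ha, N, hN, hNo, fun v hv c hc =>
    hOC ⟨⟨(u * v, a * c), ⟨P.mul_mem hu hv.2, A.mul_mem ha hc.2⟩, rfl⟩, hNO v hv.1 c hc.1⟩⟩

theorem centralizer_finite_index_in_complement_general
    {G : Type*} [Group G] [TopologicalSpace G] [IsTopologicalGroup G]
    [CompactSpace G] [T2Space G] [TotallyDisconnectedSpace G]
    {p : ℕ} (hp : p.Prime)
    (C : ℕ → Subgroup G)
    (hCclosed : ∀ i, IsClosed (C i : Set G))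
    (hCproc : ∀ i, IsProcyclicSubgroup (C i))
    (hcov : ∀ g : G, IsCoprimeCommutator g → g ∈ ⋃ i, (C i : Set G))
    (P A : Subgroup G)
    (hPclosed : IsClosed (P : Set G)) (hAclosed : IsClosed (A : Set G))
    (hPnormal : P.Normal)
    (hPp : primesOf ↥P ⊆ {p})
    (hAp' : p ∉ primesOf ↥A) :
    (Subgroup.centralizer (P : Set G)).relIndex A ≠ 0 := by
  have hPA : Disjoint (primesOf P) (primesOf A) :=
    Set.disjoint_left.mpr fun q hq hqA => hAp' (Set.mem_singleton_iff.mp (hPp hq) ▸ hqA)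
  obtain ⟨i, u, hu, a, ha, N, hN, hNo, hNC⟩ := exists_commutatorElement_mem_of_subset_iUnion
    hCclosed hPclosed hAclosed fun u hu a ha =>
      hcov _ ⟨u, a, coprimeOrders_of_mem hPclosed hAclosed hPA hu ha, rfl⟩
  set W := commClosure ((N ⊓ P : Subgroup G) : Set G) ((N ⊓ A : Subgroup G) : Set G)
  have hW : IsClosed (W : Set G) := Subgroup.isClosed_topologicalClosure _
  have hWZ : W ≤ (C i).comap (MulAut.conj (a * u) : G →* G) :=
    commClosure_le ((hCclosed i).preimage (show Continuous fun x => a * u * x * (a * u)⁻¹ by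
      fun_prop)) fun w hw c hc => conj_commutatorElement_mem hNC hw hc
  have hWP : W ≤ P := commClosure_le hPclosed fun w hw c _ =>
    commutatorElement_mem_of_mem_left (Subgroup.mem_inf.mp hw).2 c
  have hZ := (hCproc i).comap_conj (a * u)
  obtain ⟨U, hU, hUo, hUW⟩ := exists_openNormal_inf_subset_pow hZ hW hWZ hp.pos
  refine relIndex_ne_zero_of_isOpen (U := N ⊓ U) hAclosed (hNo.inter hUo) fun b ⟨hb, hbA⟩ => ?_
  have hbW : ∀ w ∈ W, Commute b w := fun w hw =>
    commute_of_commutatorElement_eq_pow hW hAclosed ((primesOf_mono hWP hPclosed).trans hPp)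
      hAp' (fun x hx y hy => hZ.commute (hWZ hx) (hWZ hy)) hbA (fun y hy =>
        hUW _ (commutatorElement_mem_commClosure_of_mem ⟨hb.1, hbA⟩ hy)
          (commutatorElement_mem_of_mem_left hb.2 y)) hw
  exact Subgroup.mem_centralizer_iff.mpr fun x hx =>
    (commute_of_commute_commClosure hPclosed hAclosed hPA hbA hb.1 hbW hx).eq

/-- Let `G` be a profinite group whose set of coprime commutators is contained in a union
of countably many procyclic closed subgroups. Suppose `G = PA`, where `P` is a closed
normal pro-`p` subgroup and `A` is a closed pronilpotent pro-`p'` subgroup. Then the index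
`[A : C_A(P)]` is finite. -/
theorem centralizer_finite_index_in_complement
    {G : Type*} [Group G] [TopologicalSpace G] [IsTopologicalGroup G]
    [CompactSpace G] [T2Space G] [TotallyDisconnectedSpace G]
    {p : ℕ} (hp : p.Prime)
    (C : ℕ → Subgroup G)
    (hCclosed : ∀ i, IsClosed (C i : Set G))
    (hCproc : ∀ i, IsProcyclicSubgroup (C i))
    (hcov : ∀ g : G, IsCoprimeCommutator g → g ∈ ⋃ i, (C i : Set G))
    (P A : Subgroup G)
    (hPclosed : IsClosed (P : Set G)) (hAclosed : IsClosed (A : Set G))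
    (hPnormal : P.Normal)
    (hPp : primesOf ↥P ⊆ {p})
    (hApronil : IsPronilpotent ↥A) (hAp' : p ∉ primesOf ↥A)
    (hprod : ∀ g : G, ∃ u ∈ P, ∃ a ∈ A, g = u * a) :
    (Subgroup.centralizer (P : Set G)).relIndex A ≠ 0 :=
  centralizer_finite_index_in_complement_general hp C hCclosed hCproc hcov P A hPclosed hAclosed
    hPnormal hPp hAp'
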